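/- arXiv:0912.0424 — 4 statements merged into one kernel-verified Lean document; each statement's English description precedes it below -/
import Mathlib

section
/- For every integer d ≥ 1, every integer t ≥ 4·(2d)^d, and every sequence v_1, v_2, …, v_t of vectors in the box [-1,1]^d whose total sum v_1 + v_2 + ⋯ + v_t lies in [-1,1]^d, there exists a subset S ⊆ {1,…,t} with 2 ≤ |S| < t such that ∑_{i∈S} v_i ∈ [-1,1]^d. (Equivalently, τ(d) < 4·(2d)^d.) -/
/-!
Call `B` fractionally balanced (for a vector `u`) if some weights `c ∈ [0,1]^B` of total
`|B| - d` satisfy `∑ c i • v i = (|B| - d) • u`. With `u` the average of all `t` vectors, the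
full index set is balanced via the constant weights `(t - d)/t`. Scaling the weights of a balanced
`B` down to total `|B| - 1 - d` and moving to a vertex of the polytope of weights on `B` with that
total and weighted sum leaves at most `d + 1` fractional weights, so some weight on `B` vanishes
and its index can be dropped (Grinberg–Sevastyanov). The result is a chain `A_d ⊆ ⋯ ⊆ A_t` with
`|A_k| = k` and `∑_{A_k} v` within sup-distance `d` of `((k - d)/t) • ∑ v`.

All these partial sums lie in a box of side `2d + 1`, and since `t - d + 1 > 2 (2d+1)^d`, three of
them share a unit cell. The outer two, `A_p ⊂ A_q` with `q ≥ p + 2`, give `S = A_q \ A_p`.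
-/

open Set Filter Topology Module
open scoped Finset

theorem exists_ne_zero_sum_smul_eq_zero {ι K V : Type*} [Fintype ι] [Field K] [AddCommGroup V]
    [Module K V] [FiniteDimensional K V] (w : ι → V) {s : Finset ι} (hs : finrank K V < #s) :
    ∃ c : ι → K, c ≠ 0 ∧ (∀ i ∉ s, c i = 0) ∧ ∑ i, c i • w i = 0 := by
  classical
  have hdep : ¬LinearIndepOn K w (s : Set ι) := fun h =>
    hs.not_ge (by simpa using h.linearIndependent.fintype_card_le_finrank)
  obtain ⟨f, hf, i, hi, hfi⟩ := not_linearIndepOn_finset_iff.1 hdep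
  refine ⟨fun j => if j ∈ s then f j else 0, fun h => hfi (by simpa [hi] using congrFun h i),
    fun j hj => if_neg hj, ?_⟩
  simpa [ite_smul] using hf

section Vertex

variable {ι E : Type*} [Fintype ι] [NormedAddCommGroup E] [NormedSpace ℝ E] [FiniteDimensional ℝ E]

theorem exists_pos_add_mul_mem_Icc {ν c : ι → ℝ} (hν : ∀ i, ν i ∈ Icc 0 1)
    (hc : ∀ i, ν i ∉ Ioo 0 1 → c i = 0) :
    ∃ ε > 0, ∀ i, ν i + ε * c i ∈ Icc 0 1 ∧ ν i - ε * c i ∈ Icc 0 1 := by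
  have hnear : ∀ᶠ s in 𝓝 (0 : ℝ), ∀ i, ν i + s * c i ∈ Icc 0 1 := by
    refine eventually_all.2 fun i => ?_
    by_cases hi : ν i ∈ Ioo 0 1
    · have hlim : Tendsto (fun s => ν i + s * c i) (𝓝 0) (𝓝 (ν i)) :=
        (by fun_prop : Continuous fun s : ℝ => ν i + s * c i).tendsto' 0 (ν i) (by simp)
      exact (hlim.eventually (Ioo_mem_nhds hi.1 hi.2)).mono fun _ h => Ioo_subset_Icc_self h
    · simp only [hc i hi, mul_zero, add_zero]
      exact .of_forall fun _ => hν i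
  have hboth : ∀ᶠ s in 𝓝[>] (0 : ℝ),
      (∀ i, ν i + s * c i ∈ Icc 0 1) ∧ ∀ i, ν i + -s * c i ∈ Icc 0 1 :=
    nhdsWithin_le_nhds (hnear.and ((continuous_neg.tendsto' 0 0 neg_zero).eventually hnear))
  obtain ⟨ε, ⟨hplus, hminus⟩, hε⟩ := (hboth.and self_mem_nhdsWithin).exists
  exact ⟨ε, hε, fun i => ⟨hplus i, by simpa [sub_eq_add_neg] using hminus i⟩⟩

theorem exists_card_fractional_le (w : ι → E) (B : Finset ι) {μ : ι → ℝ}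
    (hμ : ∀ i, μ i ∈ Icc 0 1) (hμB : ∀ i ∉ B, μ i = 0) :
    ∃ ν : ι → ℝ, (∀ i, ν i ∈ Icc 0 1) ∧ (∀ i ∉ B, ν i = 0) ∧
      ∑ i, ν i • w i = ∑ i, μ i • w i ∧ #{i | ν i ∈ Ioo 0 1} ≤ finrank ℝ E := by
  classical
  set P : Set (ι → ℝ) := (univ.pi fun _ => Icc 0 1) ∩
    {ν | (∀ i ∉ B, ν i = 0) ∧ ∑ i, ν i • w i = ∑ i, μ i • w i}
  have hP : IsCompact P := by
    refine (isCompact_univ_pi fun _ => isCompact_Icc).inter_right ?_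
    simp only [ofPred_and, ofPred_forall]
    exact (isClosed_iInter fun i => isClosed_iInter fun _ =>
      isClosed_eq (continuous_apply i) continuous_const).inter
      (isClosed_eq (by fun_prop) continuous_const)
  obtain ⟨ν, ⟨hν01, hνB, hνw⟩, hνext⟩ := hP.extremePoints_nonempty ⟨μ, mem_univ_pi.2 hμ, hμB, rfl⟩
  rw [mem_univ_pi] at hν01
  refine ⟨ν, hν01, hνB, hνw, not_lt.1 fun hlt => ?_⟩
  obtain ⟨c, hc0, hcs, hcw⟩ := exists_ne_zero_sum_smul_eq_zero w hlt
  obtain ⟨ε, hε, hmem⟩ := exists_pos_add_mul_mem_Icc hν01 fun i hi => hcs i (by simpa using hi)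
  have hP' : ∀ ρ : ℝ, (∀ i, ν i + ρ * c i ∈ Icc 0 1) → ν + ρ • c ∈ P := fun ρ h =>
    ⟨mem_univ_pi.2 h, fun i hi => by simp [hνB i hi, hcs i (by simp_all)],
      by simp [add_smul, Finset.sum_add_distrib, mul_smul, ← Finset.smul_sum, hcw, hνw]⟩
  have hmid : ν ∈ openSegment ℝ (ν + ε • c) (ν + (-ε) • c) :=
    ⟨1 / 2, 1 / 2, by norm_num, by norm_num, by norm_num, by module⟩
  have := hνext (hP' ε fun i => (hmem i).1)
    (hP' (-ε) fun i => by simpa [sub_eq_add_neg] using (hmem i).2) hmid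
  exact hc0 (smul_right_injective _ hε.ne' (by simpa using this))

end Vertex

section Steinitz

variable {ι E : Type*} [Fintype ι] [NormedAddCommGroup E] [NormedSpace ℝ E]

theorem exists_mem_eq_zero_of_sum_le {ν : ι → ℝ} {s : Finset ι} {m : ℕ}
    (hν : ∀ i, ν i ∈ Icc 0 1) (hfrac : #{i | ν i ∈ Ioo 0 1} ≤ m) (hm : 0 < m)
    (hsum : ∑ i ∈ s, ν i ≤ #s - m) : ∃ i ∈ s, ν i = 0 := by
  classical
  by_contra! hpos
  set F := s.filter fun i => ν i ∈ Ioo 0 1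
  have hF : #F ≤ m :=
    (Finset.card_le_card (Finset.filter_subset_filter _ (Finset.subset_univ s))).trans hfrac
  have hgap : ∑ i ∈ F, (1 - ν i) = ∑ i ∈ s, (1 - ν i) :=
    Finset.sum_filter_of_ne fun i hi h1 => ⟨(hν i).1.lt_of_ne (hpos i hi).symm,
      (hν i).2.lt_of_ne fun h => h1 (by rw [h, sub_self])⟩
  have hlt : ∑ i ∈ F, (1 - ν i) < m := by
    rcases F.eq_empty_or_nonempty with hF0 | hFne
    · simp [hF0, hm]
    · calc ∑ i ∈ F, (1 - ν i) < ∑ i ∈ F, (1 : ℝ) :=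
            Finset.sum_lt_sum_of_nonempty hFne fun i hi => by
              linarith [(Finset.mem_filter.1 hi).2.1]
        _ ≤ m := by simpa using (Nat.cast_le (α := ℝ)).2 hF
  rw [hgap, Finset.sum_sub_distrib] at hlt
  simp only [Finset.sum_const, nsmul_eq_mul, mul_one] at hlt
  linarith

def IsFractionallyBalanced (v : ι → E) (u : E) (B : Finset ι) : Prop :=
  ∃ c : ι → ℝ, (∀ i, c i ∈ Icc 0 1) ∧ (∀ i ∉ B, c i = 0) ∧
    ∑ i, c i = #B - finrank ℝ E ∧ ∑ i, c i • v i = (#B - finrank ℝ E : ℝ) • u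

variable {v : ι → E} {u : E} {B : Finset ι}

theorem isFractionallyBalanced_univ [Nonempty ι] (v : ι → E)
    (hd : finrank ℝ E ≤ Fintype.card ι) :
    IsFractionallyBalanced v ((Fintype.card ι : ℝ)⁻¹ • ∑ i, v i) Finset.univ := by
  have hn : (0 : ℝ) < Fintype.card ι := by exact_mod_cast Fintype.card_pos
  have hd' : (finrank ℝ E : ℝ) ≤ Fintype.card ι := by exact_mod_cast hd
  refine ⟨fun _ => (Fintype.card ι - finrank ℝ E) / Fintype.card ι,
    fun _ => ⟨div_nonneg (by linarith) hn.le, div_le_one_of_le₀ (by linarith) hn.le⟩,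
    by simp, ?_, ?_⟩
  · simp only [Finset.sum_const, Finset.card_univ, nsmul_eq_mul]
    field_simp
  · rw [← Finset.smul_sum, Finset.card_univ, smul_smul, div_eq_mul_inv]

theorem IsFractionallyBalanced.norm_sum_sub_smul_le (hB : IsFractionallyBalanced v u B)
    (hv : ∀ i, ‖v i‖ ≤ 1) : ‖∑ i ∈ B, v i - (#B - finrank ℝ E : ℝ) • u‖ ≤ finrank ℝ E := by
  obtain ⟨c, hc01, hcB, hcsum, hcv⟩ := hB
  rw [← hcv, ← Finset.sum_subset (Finset.subset_univ B) fun i _ hi => by rw [hcB i hi, zero_smul],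
    ← Finset.sum_sub_distrib]
  calc ‖∑ i ∈ B, (v i - c i • v i)‖ ≤ ∑ i ∈ B, (1 - c i) := by
        refine norm_sum_le_of_le B fun i _ => ?_
        have hci : 0 ≤ 1 - c i := by linarith [(hc01 i).2]
        calc ‖v i - c i • v i‖ = (1 - c i) * ‖v i‖ := by
              rw [← norm_smul_of_nonneg hci, sub_smul, one_smul]
          _ ≤ 1 - c i := mul_le_of_le_one_right hci (hv i)
    _ = finrank ℝ E := by
        rw [Finset.sum_sub_distrib, Finset.sum_subset (Finset.subset_univ B) fun i _ hi => hcB i hi,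
          hcsum]
        simp

theorem IsFractionallyBalanced.exists_erase [FiniteDimensional ℝ E] [DecidableEq ι]
    (hB : IsFractionallyBalanced v u B)
    (hdB : finrank ℝ E < #B) : ∃ i ∈ B, IsFractionallyBalanced v u (B.erase i) := by
  obtain ⟨c, hc01, hcB, hcsum, hcv⟩ := hB
  set d := finrank ℝ E
  have hk : (d : ℝ) + 1 ≤ #B := by exact_mod_cast hdB
  set r : ℝ := (#B - 1 - d) / (#B - d)
  have hr : r ∈ Icc 0 1 :=
    ⟨div_nonneg (by linarith) (by linarith), div_le_one_of_le₀ (by linarith) (by linarith)⟩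
  have hrk : r * (#B - d) = #B - 1 - d := div_mul_cancel₀ _ (by linarith)
  obtain ⟨ν, hν01, hνB, hνw, hνfrac⟩ := exists_card_fractional_le (fun i => ((1 : ℝ), v i)) B
    (μ := fun i => r * c i)
    (fun i => ⟨mul_nonneg hr.1 (hc01 i).1, mul_le_one₀ hr.2 (hc01 i).1 (hc01 i).2⟩)
    (fun i hi => by simp [hcB i hi])
  have hνsum : ∑ i, ν i = #B - 1 - d := by
    have := congrArg Prod.fst hνw
    simp only [Prod.fst_sum, Prod.smul_mk, smul_eq_mul, mul_one, ← Finset.mul_sum, hcsum] at this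
    rw [this, hrk]
  have hνv : ∑ i, ν i • v i = (#B - 1 - d : ℝ) • u := by
    have := congrArg Prod.snd hνw
    simp only [Prod.snd_sum, Prod.smul_mk, smul_eq_mul] at this
    rw [this, ← hrk, ← smul_smul, ← hcv, Finset.smul_sum]
    simp only [smul_smul]
  rw [Module.finrank_prod, finrank_self] at hνfrac
  have hνBsum : ∑ i ∈ B, ν i = ∑ i, ν i :=
    Finset.sum_subset (Finset.subset_univ B) fun i _ hi => hνB i hi
  obtain ⟨i, hi, hνi⟩ := exists_mem_eq_zero_of_sum_le hν01 hνfrac (by omega)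
    (by rw [hνBsum, hνsum]; push_cast; linarith)
  have hcard : (#(B.erase i) : ℝ) = #B - 1 := by
    rw [Finset.card_erase_of_mem hi, Nat.cast_pred (Finset.card_pos.2 ⟨i, hi⟩)]
  refine ⟨i, hi, ν, hν01, fun j hj => ?_, by rw [hcard, hνsum], by rw [hcard, hνv]⟩
  by_cases hji : j = i
  · rw [hji, hνi]
  · exact hνB j fun hjB => hj (Finset.mem_erase.2 ⟨hji, hjB⟩)

theorem IsFractionallyBalanced.exists_chain [FiniteDimensional ℝ E]
    (hB : IsFractionallyBalanced v u B) :
    ∃ A : ℕ → Finset ι, A #B = B ∧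
      (∀ k, finrank ℝ E ≤ k → k ≤ #B → #(A k) = k ∧ IsFractionallyBalanced v u (A k)) ∧
      ∀ k l, finrank ℝ E ≤ k → k ≤ l → l ≤ #B → A k ⊆ A l := by
  classical
  induction B using Finset.strongInduction with
  | H B ih =>
  by_cases hdB : #B ≤ finrank ℝ E
  · exact ⟨fun _ => B, rfl, fun k hk hkB => ⟨le_antisymm (hdB.trans hk) hkB, hB⟩,
      fun _ _ _ _ _ => subset_rfl⟩
  obtain ⟨i, hi, hB'⟩ := hB.exists_erase (by omega)
  obtain ⟨A, hAB, hA, hmono⟩ := ih _ (Finset.erase_ssubset hi) hB'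
  have hcard := Finset.card_erase_of_mem hi
  rw [hcard] at hAB hA hmono
  refine ⟨fun k => if #B ≤ k then B else A k, by simp, fun k hk hkB => ?_,
    fun k l hk hkl hlB => ?_⟩
  · dsimp only
    split_ifs with h
    · exact ⟨by omega, hB⟩
    · exact hA k hk (by omega)
  · dsimp only
    split_ifs with h1 h2 h2
    · exact subset_rfl
    · omega
    · exact (hmono k (#B - 1) hk (by omega) le_rfl).trans (hAB ▸ Finset.erase_subset i B)
    · exact hmono k l hk hkl (by omega)

theorem exists_chain_norm_sum_sub_smul_le [FiniteDimensional ℝ E] [Nonempty ι] (hv : ∀ i, ‖v i‖ ≤ 1)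
    (hd : finrank ℝ E ≤ Fintype.card ι) :
    ∃ A : ℕ → Finset ι,
      (∀ k, finrank ℝ E ≤ k → k ≤ Fintype.card ι → #(A k) = k ∧
        ‖∑ i ∈ A k, v i - ((k - finrank ℝ E) / Fintype.card ι : ℝ) • ∑ i, v i‖ ≤ finrank ℝ E) ∧
      ∀ k l, finrank ℝ E ≤ k → k ≤ l → l ≤ Fintype.card ι → A k ⊆ A l := by
  obtain ⟨A, -, hA, hmono⟩ := (isFractionallyBalanced_univ v hd).exists_chain
  rw [Finset.card_univ] at hA hmono
  refine ⟨A, fun k hk hkn => ?_, hmono⟩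
  obtain ⟨hcard, hbal⟩ := hA k hk hkn
  refine ⟨hcard, ?_⟩
  have := hbal.norm_sum_sub_smul_le hv
  rwa [hcard, smul_smul, ← div_eq_mul_inv] at this

end Steinitz

section Pigeonhole

/-- The unit cell `[n, n + 1)` of `[0, L]` containing `y`, with the top cell `[L - 1, L]` closed. -/
noncomputable def boxCell (L : ℕ) (y : ℝ) : ℤ := min ⌊y⌋ (L - 1)

theorem boxCell_nonneg {L : ℕ} {y : ℝ} (hL : 0 < L) (hy : 0 ≤ y) : 0 ≤ boxCell L y :=
  le_min (Int.floor_nonneg.2 hy) (by omega)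

theorem boxCell_le_sub_one (L : ℕ) (y : ℝ) : boxCell L y ≤ L - 1 := min_le_right _ _

theorem boxCell_le (L : ℕ) (y : ℝ) : (boxCell L y : ℝ) ≤ y :=
  (Int.cast_le.2 (min_le_left _ _)).trans (Int.floor_le y)

theorem le_boxCell_add_one {L : ℕ} {y : ℝ} (hy : y ≤ L) : y ≤ boxCell L y + 1 := by
  rcases le_total ⌊y⌋ (L - 1) with h | h
  · rw [boxCell, min_eq_left h]
    exact (Int.lt_floor_add_one y).le
  · rw [boxCell, min_eq_right h]
    push_cast
    linarith

theorem abs_sub_le_one_of_boxCell_eq {L : ℕ} {y y' : ℝ} (hy : y ≤ L) (hy' : y' ≤ L)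
    (h : boxCell L y = boxCell L y') : |y - y'| ≤ 1 := by
  have h₁ := boxCell_le L y
  have h₂ := boxCell_le L y'
  have h₃ := le_boxCell_add_one hy
  have h₄ := le_boxCell_add_one hy'
  rw [h] at h₁ h₃
  exact abs_sub_le_iff.2 ⟨by linarith, by linarith⟩

theorem exists_add_le_of_lt_card {m : ℕ} {s : Finset ℕ} (h : m < #s) :
    ∃ p ∈ s, ∃ q ∈ s, p + m ≤ q := by
  have hne : s.Nonempty := Finset.card_pos.1 (by omega)
  refine ⟨s.min' hne, s.min'_mem hne, s.max' hne, s.max'_mem hne, ?_⟩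
  have : #s ≤ #(Finset.Icc (s.min' hne) (s.max' hne)) :=
    Finset.card_le_card fun x hx => Finset.mem_Icc.2 ⟨s.min'_le x hx, s.le_max' x hx⟩
  rw [Nat.card_Icc] at this
  omega

theorem exists_add_le_abs_sub_le_one {κ : Type*} [Fintype κ] {L m : ℕ} (hL : 0 < L)
    (s : Finset ℕ) (x : ℕ → κ → ℝ) (lo : κ → ℝ)
    (hx : ∀ k ∈ s, ∀ j, x k j ∈ Icc (lo j) (lo j + L)) (hs : m * L ^ Fintype.card κ < #s) :
    ∃ p ∈ s, ∃ q ∈ s, p + m ≤ q ∧ ∀ j, |x q j - x p j| ≤ 1 := by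
  classical
  set cell : ℕ → κ → ℤ := fun k j => boxCell L (x k j - lo j)
  have hmaps : ∀ k ∈ s, cell k ∈ Finset.Icc (0 : κ → ℤ) (fun _ => (L : ℤ) - 1) :=
    fun k hk => Finset.mem_Icc.2 ⟨fun j => boxCell_nonneg hL (by linarith [(hx k hk j).1]),
      fun j => boxCell_le_sub_one _ _⟩
  have hcard : #(Finset.Icc (0 : κ → ℤ) (fun _ => (L : ℤ) - 1)) = L ^ Fintype.card κ := by
    simp [Pi.card_Icc, Int.card_Icc]
  obtain ⟨c, -, hc⟩ := Finset.exists_lt_card_fiber_of_mul_lt_card_of_maps_to hmaps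
    (by rwa [hcard, mul_comm])
  obtain ⟨p, hp, q, hq, hpq⟩ := exists_add_le_of_lt_card hc
  rw [Finset.mem_filter] at hp hq
  refine ⟨p, hp.1, q, hq.1, hpq, fun j => ?_⟩
  have := abs_sub_le_one_of_boxCell_eq (by linarith [(hx q hq.1 j).2])
    (by linarith [(hx p hp.1 j).2]) (congrFun (hq.2.trans hp.2.symm) j)
  rwa [sub_sub_sub_cancel_right] at this

end Pigeonhole

theorem mem_Icc_of_abs_sub_mul_le {x a T D : ℝ} (hx : |x - a * T| ≤ D) (ha : a ∈ Icc 0 1)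
    (hT : |T| ≤ 1) : x ∈ Icc (min 0 T - D) (min 0 T - D + (2 * D + 1)) := by
  rw [abs_le] at hx hT
  rcases le_total 0 T with hT0 | hT0
  · rw [min_eq_left hT0]
    constructor <;> nlinarith [ha.1, ha.2]
  · rw [min_eq_right hT0]
    constructor <;> nlinarith [ha.1, ha.2]

theorem four_mul_two_mul_add_one_pow_le (d : ℕ) : 4 * (2 * d + 1) ^ d ≤ 7 * (2 * d) ^ d := by
  rcases Nat.eq_zero_or_pos d with rfl | hd
  · simp
  set x : ℝ := (1 + ((2 * d : ℕ) : ℝ)⁻¹) ^ d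
  have hx0 : 0 ≤ x := by positivity
  have hx : x ^ 2 ≤ Real.exp 1 := by
    rw [← pow_mul, mul_comm]
    exact Real.one_add_inv_pow_le_exp
  have hx' : x ≤ 7 / 4 := by nlinarith [Real.exp_one_lt_d9]
  have hsplit : ((2 * d + 1 : ℕ) : ℝ) ^ d = ((2 * d : ℕ) : ℝ) ^ d * x := by
    rw [← mul_pow]
    congr 1
    have : ((2 * d : ℕ) : ℝ) ≠ 0 := by positivity
    field_simp
    push_cast
    ring
  have : (4 : ℝ) * ((2 * d + 1 : ℕ) : ℝ) ^ d ≤ 7 * ((2 * d : ℕ) : ℝ) ^ d := by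
    rw [hsplit]
    nlinarith [pow_nonneg (Nat.cast_nonneg (α := ℝ) (2 * d)) d]
  exact_mod_cast this

theorem add_two_mul_two_mul_add_one_pow_le {d : ℕ} (hd : 1 ≤ d) :
    d + 2 * (2 * d + 1) ^ d ≤ 4 * (2 * d) ^ d := by
  have hself : 2 * d ≤ (2 * d) ^ d := Nat.le_self_pow (by omega) _
  have := four_mul_two_mul_add_one_pow_le d
  generalize (2 * d) ^ d = P at *
  generalize (2 * d + 1) ^ d = Q at *
  omega

theorem exists_chain_sum_apply_mem_Icc {d t : ℕ} (hd : 1 ≤ d) (hdt : d ≤ t)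
    (v : Fin t → Fin d → ℝ) (hbox : ∀ i j, |v i j| ≤ 1) (hsum : ∀ j, |∑ i, v i j| ≤ 1) :
    ∃ A : ℕ → Finset (Fin t),
      (∀ k ∈ Finset.Icc d t, #(A k) = k ∧ ∀ j, ∑ i ∈ A k, v i j ∈
        Icc (min 0 (∑ i, v i j) - d) (min 0 (∑ i, v i j) - d + (2 * d + 1 : ℕ))) ∧
      ∀ k l, d ≤ k → k ≤ l → l ≤ t → A k ⊆ A l := by
  have : Nonempty (Fin t) := ⟨⟨0, by omega⟩⟩
  obtain ⟨A, hA, hmono⟩ := exists_chain_norm_sum_sub_smul_le (E := Fin d → ℝ) (v := v)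
    (fun i => (pi_norm_le_iff_of_nonneg zero_le_one).2 fun j => by simpa using hbox i j)
    (by rwa [Module.finrank_fin_fun, Fintype.card_fin])
  simp only [Module.finrank_fin_fun, Fintype.card_fin] at hA hmono
  refine ⟨A, fun k hk => ⟨(hA k (Finset.mem_Icc.1 hk).1 (Finset.mem_Icc.1 hk).2).1, fun j => ?_⟩,
    hmono⟩
  rw [Finset.mem_Icc] at hk
  have hkt : (k : ℝ) ≤ t := by exact_mod_cast hk.2
  have hdk : (d : ℝ) ≤ k := by exact_mod_cast hk.1
  have := (norm_le_pi_norm _ j).trans (hA k hk.1 hk.2).2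
  simp only [Pi.sub_apply, Finset.sum_apply, Pi.smul_apply, smul_eq_mul, Real.norm_eq_abs] at this
  push_cast
  exact mem_Icc_of_abs_sub_mul_le this
    ⟨div_nonneg (by linarith) (by linarith), div_le_one_of_le₀ (by linarith) (by linarith)⟩
    (hsum j)

/-- Upper bound: τ(d) < 4·(2d)^d. For every `d ≥ 1`, every `t ≥ 4·(2d)^d`, and every
sequence of `t` vectors in the box `[-1,1]^d` whose total sum lies in the box, there is
a subset `S` of indices with `2 ≤ |S| < t` whose sum lies in the box. -/
theorem stmt_0 (d t : ℕ) (hd : 1 ≤ d) (ht : 4 * (2 * d) ^ d ≤ t)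
    (v : Fin t → Fin d → ℝ)
    (hbox : ∀ i j, |v i j| ≤ 1)
    (hsum : ∀ j, |∑ i, v i j| ≤ 1) :
    ∃ S : Finset (Fin t), 2 ≤ S.card ∧ S.card < t ∧ ∀ j, |∑ i ∈ S, v i j| ≤ 1 := by
  have hdt := (add_two_mul_two_mul_add_one_pow_le hd).trans ht
  obtain ⟨A, hA, hmono⟩ := exists_chain_sum_apply_mem_Icc hd (by omega) v hbox hsum
  obtain ⟨p, hp, q, hq, hpq, hclose⟩ := exists_add_le_abs_sub_le_one (m := 2) (by omega)
    (Finset.Icc d t) _ _ (fun k hk => (hA k hk).2) (by rw [Fintype.card_fin, Nat.card_Icc]; omega)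
  have hdp := (Finset.mem_Icc.1 hp).1
  have hqt := (Finset.mem_Icc.1 hq).2
  have hsub := hmono p q hdp (by omega) hqt
  have hcard : #(A q \ A p) = q - p := by
    rw [Finset.card_sdiff_of_subset hsub, (hA q hq).1, (hA p hp).1]
  refine ⟨A q \ A p, by omega, by omega, fun j => ?_⟩
  rw [Finset.sum_sdiff_eq_sub hsub]
  exact hclose j
end

section
/- For every integer t ≥ 2 and every sequence v_1, …, v_t of vectors in [-1,1]^2 with v_1 + ⋯ + v_t ∈ [-1,1]^2, there exist indices i ≠ j in {1,…,t} such that v_i + v_j ∈ [-1,1]^2. (Equivalently, τ(2) = 2.) -/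
/-!
Suppose no two of the vectors have sum in the box. Two entries of opposite (weak) signs always
add up to a number in `[-1,1]`, so every pair `(i, j)` has a coordinate `k` in which `v i k` and
`v j k` have the same strict sign and overflow. Since the `k`-th coordinate of the total sum is in
`[-1,1]`, some vector `v l` must then have the opposite strict sign in that coordinate. Chasing
this twice from a first pair produces two vectors whose signs are strictly opposite in both
coordinates, and their sum lies in the box.
-/

lemma abs_add_le_one_of_mul_nonpos {x y : ℝ} (hx : |x| ≤ 1) (hy : |y| ≤ 1) (hxy : x * y ≤ 0) :
    |x + y| ≤ 1 := by
  rw [abs_le] at *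
  constructor <;> nlinarith

lemma mul_neg_of_mul_pos_of_mul_neg {a b c : ℝ} (hab : 0 < a * b) (hac : a * c < 0) :
    b * c < 0 := by
  by_contra! hbc
  nlinarith [mul_neg_of_pos_of_neg hab hac, mul_nonneg (mul_self_nonneg a) hbc]

lemma Fin.eq_or_eq_of_ne {a b : Fin 2} (hab : a ≠ b) (c : Fin 2) : c = a ∨ c = b := by
  omega

lemma Finset.add_le_sum_univ {ι : Type*} [Fintype ι] {x : ι → ℝ} (hx : ∀ l, 0 ≤ x l) {i j : ι}
    (hij : i ≠ j) : x i + x j ≤ ∑ l, x l := by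
  classical
  rw [← Finset.sum_pair hij]
  exact Finset.sum_le_sum_of_subset_of_nonneg (Finset.subset_univ _) fun l _ _ => hx l

lemma exists_mul_neg_of_one_lt_abs_add {ι : Type*} [Fintype ι] {x : ι → ℝ}
    (hsum : |∑ l, x l| ≤ 1) {i j : ι} (hij : i ≠ j) (hxi : x i ≠ 0) (h : 1 < |x i + x j|) :
    ∃ l, x l * x i < 0 := by
  by_contra! hsame
  rcases hxi.lt_or_gt with hneg | hpos
  · have hnonpos : ∀ l, 0 ≤ -x l := fun l => by nlinarith [hsame l]
    have hpair := Finset.add_le_sum_univ hnonpos hij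
    rw [Finset.sum_neg_distrib] at hpair
    rw [abs_le] at hsum
    rw [lt_abs] at h
    rcases h with h | h <;> nlinarith [hnonpos i, hnonpos j]
  · have hnonneg : ∀ l, 0 ≤ x l := fun l => by nlinarith [hsame l]
    have hpair := Finset.add_le_sum_univ hnonneg hij
    rw [abs_le] at hsum
    rw [lt_abs] at h
    rcases h with h | h <;> nlinarith [hnonneg i, hnonneg j]

section Plane

variable {ι : Type*} [Fintype ι] {v : ι → Fin 2 → ℝ}

lemma mul_pos_and_exists_mul_neg_of_one_lt_abs_add (hbox : ∀ i k, |v i k| ≤ 1)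
    (hsum : ∀ k, |∑ i, v i k| ≤ 1) {i j : ι} (hij : i ≠ j) {k : Fin 2}
    (hk : 1 < |v i k + v j k|) : 0 < v i k * v j k ∧ ∃ l, v l k * v i k < 0 := by
  have hpos : 0 < v i k * v j k := by
    by_contra! hle
    exact hk.not_ge (abs_add_le_one_of_mul_nonpos (hbox i k) (hbox j k) hle)
  refine ⟨hpos, exists_mul_neg_of_one_lt_abs_add (hsum k) hij ?_ hk⟩
  rintro h0
  simp [h0] at hpos

theorem exists_ne_forall_abs_add_le_one (hbox : ∀ i k, |v i k| ≤ 1)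
    (hsum : ∀ k, |∑ i, v i k| ≤ 1) {a b : ι} (hab : a ≠ b) :
    ∃ i j, i ≠ j ∧ ∀ k, |v i k + v j k| ≤ 1 := by
  by_contra! hbad
  have key := @mul_pos_and_exists_mul_neg_of_one_lt_abs_add _ _ _ hbox hsum
  have ne_of_mul_neg : ∀ {i j : ι} {k : Fin 2}, v i k * v j k < 0 → i ≠ j := by
    rintro i j k h rfl
    nlinarith [mul_self_nonneg (v i k)]
  obtain ⟨k, hk⟩ := hbad a b hab
  obtain ⟨-, l, hla⟩ := key hab hk
  obtain ⟨k', hk'⟩ := hbad l a (ne_of_mul_neg hla)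
  obtain ⟨hla', m, hml⟩ := key (ne_of_mul_neg hla) hk'
  have hkk' : k ≠ k' := by
    rintro rfl
    exact hla.not_gt hla'
  obtain ⟨k'', hk''⟩ := hbad l m (ne_of_mul_neg hml).symm
  obtain ⟨hlm, -⟩ := key (ne_of_mul_neg hml).symm hk''
  have hk''k : k'' = k := by
    refine ((Fin.eq_or_eq_of_ne hkk') k'').resolve_right ?_
    rintro rfl
    linarith
  rw [hk''k] at hlm
  have hopp : ∀ c, v a c * v m c < 0 := by
    intro c
    rcases Fin.eq_or_eq_of_ne hkk' c with rfl | rfl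
    · have := mul_neg_of_mul_pos_of_mul_neg hlm hla
      linarith
    · exact mul_neg_of_mul_pos_of_mul_neg hla' (by linarith)
  obtain ⟨c, hc⟩ := hbad a m (ne_of_mul_neg (hopp k))
  exact hc.not_ge (abs_add_le_one_of_mul_nonpos (hbox a c) (hbox m c) (hopp c).le)

end Plane

/-- τ(2) = 2: in any sequence of `t ≥ 2` vectors in `[-1,1]^2` with sum in `[-1,1]^2`,
some two of the vectors have sum in `[-1,1]^2`. -/
theorem stmt_3 (t : ℕ) (ht : 2 ≤ t) (v : Fin t → Fin 2 → ℝ)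
    (hbox : ∀ i j, |v i j| ≤ 1)
    (hsum : ∀ j, |∑ i, v i j| ≤ 1) :
    ∃ i j : Fin t, i ≠ j ∧ ∀ k, |v i k + v j k| ≤ 1 := by
  have : Nontrivial (Fin t) := Fin.nontrivial_iff_two_le.2 ht
  obtain ⟨a, b, hab⟩ := exists_pair_ne (Fin t)
  exact exists_ne_forall_abs_add_le_one hbox hsum hab
end

section
/- (Steinitz lemma, Grinberg–Sevastyanov version.) Let d ≥ 1, let ‖·‖ be any norm on ℝ^d, and let v_1, …, v_n be vectors in ℝ^d with ‖v_i‖ ≤ 1 for all i and v_1 + ⋯ + v_n = 0. Then there exists a permutation π of {1,…,n} such that for every k = 1, 2, …, n, the partial sum v_{π(1)} + v_{π(2)} + ⋯ + v_{π(k)} has norm at most d. -/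
/-!
For `d ≤ k ≤ n` we build nested index sets `A_n ⊇ ⋯ ⊇ A_d` with `#A_k = k`, each carrying
weights `λ ∈ [0,1]^{A_k}` with `∑ λᵢ = k - d` and `∑ λᵢ vᵢ = 0`. Then
`∑_{A_k} vᵢ = ∑ (1 - λᵢ) vᵢ` has norm at most `∑ (1 - λᵢ) = d`.
To pass from `A_k` to `A_{k-1}`, rescale the weights to total `k - 1 - d` and take a vertex of the
polytope of such weights: it satisfies `d + 1` linear equations, so at most `d + 1` of
its weights are fractional, and as the total is `#A_k - (d + 1)`, some weight must vanish; that
index is dropped. Listing the dropped indices from the back gives the permutation; prefixes of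
length `k < d` have norm at most `k` by the triangle inequality.
-/

open Finset Filter Topology Module

theorem Fintype.exists_nontrivial_relation_sum_zero_of_finrank_succ_lt_card
    {K V ι : Type*} [Field K] [AddCommGroup V] [Module K V] [FiniteDimensional K V] [Fintype ι]
    (v : ι → V) (s : Finset ι) (h : finrank K V + 1 < #s) :
    ∃ μ : ι → K, μ ≠ 0 ∧ (∀ i ∉ s, μ i = 0) ∧ ∑ i, μ i = 0 ∧ ∑ i, μ i • v i = 0 := by
  have hdep : ¬ LinearIndepOn K (fun i => (v i, (1 : K))) (s : Set ι) := fun hind => by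
    have := hind.linearIndependent.fintype_card_le_finrank
    simp only [Finset.coe_sort_coe, Fintype.card_coe, finrank_prod, finrank_self] at this
    omega
  obtain ⟨μ, hμs, hμ, hμ0⟩ := linearDepOn_iff'.mp hdep
  rw [Finsupp.linearCombination_apply, Finsupp.sum_fintype _ _ (by simp)] at hμ
  refine ⟨μ, by simpa [DFunLike.ext_iff, funext_iff] using hμ0,
    (Finsupp.mem_supported' K μ).mp hμs, ?_, ?_⟩
  · simpa [Prod.snd_sum] using congrArg Prod.snd hμ
  · simpa [Prod.fst_sum] using congrArg Prod.fst hμ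

theorem List.Nodup.exists_perm_image_filter_lt_eq_toFinset_take {n : ℕ} {L : List (Fin n)}
    (hL : L.Nodup) (hmem : ∀ x, x ∈ L) :
    ∃ π : Equiv.Perm (Fin n), ∀ k,
      ({i | (i : ℕ) < k} : Finset (Fin n)).image π = (L.take k).toFinset := by
  have hlen : L.length = n := by
    rw [← List.toFinset_card_of_nodup hL, eq_univ_of_forall (s := L.toFinset) (by simpa using hmem),
      card_univ, Fintype.card_fin]
  refine ⟨(finCongr hlen.symm).trans (hL.getEquivOfForallMemList L hmem), fun k => ?_⟩
  ext x
  simp only [Equiv.coe_trans, mem_image, Finset.mem_filter, mem_univ, true_and, Function.comp_apply,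
    finCongr_apply, List.Nodup.getEquivOfForallMemList_apply, List.get_eq_getElem, Fin.val_cast,
    List.mem_toFinset, List.mem_take_iff_getElem, lt_inf_iff]
  constructor
  · rintro ⟨i, hik, rfl⟩
    exact ⟨i, ⟨hik, by omega⟩, rfl⟩
  · rintro ⟨j, hj, rfl⟩
    exact ⟨⟨j, by omega⟩, hj.1, rfl⟩

theorem Seminorm.sum_le_card {V ι : Type*} [AddCommGroup V] [Module ℝ V] (p : Seminorm ℝ V)
    {v : ι → V} (hv : ∀ i, p (v i) ≤ 1) (s : Finset ι) : p (∑ i ∈ s, v i) ≤ #s :=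
  calc p (∑ i ∈ s, v i) ≤ ∑ i ∈ s, p (v i) :=
        le_sum_of_subadditive p (map_zero p).le (map_add_le_add p) s v
    _ ≤ #s := by simpa using sum_le_sum fun i (_ : i ∈ s) => hv i

namespace Steinitz

variable {V ι : Type*} [AddCommGroup V] [Module ℝ V] [Fintype ι]

def weightPolytope (v : ι → V) (s : Finset ι) (c : ℝ) : Set (ι → ℝ) :=
  {l | l ∈ Set.Icc 0 1 ∧ (∀ i ∉ s, l i = 0) ∧ ∑ i, l i = c ∧ ∑ i, l i • v i = 0}

theorem isCompact_weightPolytope (v : ι → V) (s : Finset ι) (c : ℝ) :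
    IsCompact (weightPolytope v s c) := by
  refine isCompact_Icc.of_isClosed_subset ?_ fun l hl => hl.1
  have hker : IsClosed {l : ι → ℝ | ∑ i, l i • v i = 0} := by
    convert (LinearMap.ker (Fintype.linearCombination ℝ v)).closed_of_finiteDimensional
    ext l; simp [Fintype.linearCombination_apply]
  simp only [weightPolytope, Set.ofPred_and, Set.ofPred_forall]
  refine isClosed_Icc.inter ((isClosed_iInter fun i => isClosed_iInter fun _ => ?_).inter
    ((isClosed_eq (by fun_prop) continuous_const).inter hker))
  exact isClosed_eq (continuous_apply i) continuous_const

theorem smul_mem_weightPolytope {v : ι → V} {s : Finset ι} {c r : ℝ} {l : ι → ℝ}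
    (hl : l ∈ weightPolytope v s c) (hr : r ∈ Set.Icc (0 : ℝ) 1) :
    r • l ∈ weightPolytope v s (r * c) := by
  obtain ⟨⟨hl0, hl1⟩, hsupp, hsum, hsumv⟩ := hl
  refine ⟨⟨fun i => mul_nonneg hr.1 (hl0 i), fun i => ?_⟩, fun i hi => ?_, ?_, ?_⟩
  · exact mul_le_one₀ hr.2 (hl0 i) (hl1 i)
  · simp [hsupp i hi]
  · simp [← Finset.mul_sum, hsum]
  · simp [mul_smul, ← Finset.smul_sum, hsumv]

theorem mem_weightPolytope_erase [DecidableEq ι] {v : ι → V} {s : Finset ι} {c : ℝ} {l : ι → ℝ}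
    (hl : l ∈ weightPolytope v s c) {i : ι} (hi : l i = 0) :
    l ∈ weightPolytope v (s.erase i) c := by
  refine ⟨hl.1, fun j hj => ?_, hl.2.2⟩
  obtain rfl | hji := eq_or_ne j i
  · exact hi
  · exact hl.2.1 j fun hjs => hj (mem_erase.mpr ⟨hji, hjs⟩)

theorem const_mem_weightPolytope_univ {v : ι → V} (hv : ∑ i, v i = 0) {d : ℝ} (hd₀ : 0 ≤ d)
    (hd : d ≤ Fintype.card ι) :
    (fun _ => 1 - d / Fintype.card ι) ∈ weightPolytope v univ (Fintype.card ι - d) := by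
  refine ⟨⟨fun _ => sub_nonneg.mpr (div_le_one_of_le₀ hd (Nat.cast_nonneg _)),
    fun _ => sub_le_self _ (by positivity)⟩, fun i hi => absurd (mem_univ i) hi, ?_, ?_⟩
  · have hcancel : (Fintype.card ι : ℝ) * d / Fintype.card ι = d :=
      mul_div_cancel_left_of_imp fun h => le_antisymm (h ▸ hd) hd₀
    rw [sum_const, card_univ, nsmul_eq_mul, mul_sub, mul_one, ← mul_div_assoc, hcancel]
  · rw [← Finset.smul_sum, hv, smul_zero]

theorem eventually_add_smul_mem_weightPolytope {v : ι → V} {s : Finset ι} {c : ℝ} {l μ : ι → ℝ}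
    (hl : l ∈ weightPolytope v s c) (hμ : ∀ i, l i ∉ Set.Ioo 0 1 → μ i = 0)
    (hμsum : ∑ i, μ i = 0) (hμv : ∑ i, μ i • v i = 0) :
    ∀ᶠ ε in 𝓝 (0 : ℝ), l + ε • μ ∈ weightPolytope v s c := by
  obtain ⟨⟨hl0, hl1⟩, hsupp, hsum, hsumv⟩ := hl
  have hbox : ∀ᶠ ε in 𝓝 (0 : ℝ), ∀ i, l i + ε * μ i ∈ Set.Icc 0 1 := by
    refine eventually_all.mpr fun i => ?_
    by_cases hi : l i ∈ Set.Ioo 0 1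
    · have hcont : ContinuousAt (fun ε : ℝ => l i + ε * μ i) 0 := by fun_prop
      refine (hcont.eventually_mem ?_).mono fun _ h => Set.Ioo_subset_Icc_self h
      simpa using isOpen_Ioo.mem_nhds hi
    · simpa [hμ i hi] using ⟨hl0 i, hl1 i⟩
  filter_upwards [hbox] with ε hε
  refine ⟨⟨fun i => (hε i).1, fun i => (hε i).2⟩, fun i hi => ?_, ?_, ?_⟩
  · simp [hsupp i hi, hμ i (by simp [hsupp i hi])]
  · simp [Finset.sum_add_distrib, ← Finset.mul_sum, hμsum, hsum]
  · simp [add_smul, mul_smul, Finset.sum_add_distrib, ← Finset.smul_sum, hμv, hsumv]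

theorem card_fractional_le_of_mem_extremePoints [FiniteDimensional ℝ V] {v : ι → V}
    {s : Finset ι} {c : ℝ} {l : ι → ℝ} (hl : l ∈ (weightPolytope v s c).extremePoints ℝ) :
    #{i | l i ∈ Set.Ioo 0 1} ≤ finrank ℝ V + 1 := by
  by_contra! hcard
  obtain ⟨μ, hμ0, hμsupp, hμsum, hμv⟩ :=
    Fintype.exists_nontrivial_relation_sum_zero_of_finrank_succ_lt_card (K := ℝ) v _ hcard
  have hline := eventually_add_smul_mem_weightPolytope hl.1
    (fun i hi => hμsupp i (by simpa using hi)) hμsum hμv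
  have hpair := hline.and ((continuous_neg.tendsto' (0 : ℝ) 0 neg_zero).eventually hline)
  obtain ⟨ε, ⟨hplus, hminus⟩, hε⟩ :=
    ((hpair.filter_mono nhdsWithin_le_nhds).and self_mem_nhdsWithin).exists (f := 𝓝[≠] (0 : ℝ))
  have hseg : l ∈ openSegment ℝ (l + ε • μ) (l + (-ε) • μ) :=
    ⟨1 / 2, 1 / 2, by norm_num, by norm_num, by norm_num, by module⟩
  have hεμ : ε • μ = 0 := by simpa using hl.2 hplus hminus hseg
  exact hμ0 ((smul_eq_zero.mp hεμ).resolve_left hε)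

theorem exists_eq_zero_of_card_fractional_le {v : ι → V} {s : Finset ι} {d : ℕ} {l : ι → ℝ}
    (hl : l ∈ weightPolytope v s (#s - 1 - d)) (hcard : #{i | l i ∈ Set.Ioo 0 1} ≤ d + 1) :
    ∃ i ∈ s, l i = 0 := by
  obtain ⟨⟨hl0, hl1⟩, hsupp, hsum, -⟩ := hl
  by_contra! hpos
  set F : Finset ι := {i | l i ∈ Set.Ioo 0 1}
  have hFs : F ⊆ s := fun i hiF => by
    by_contra his
    simp [F, hsupp i his] at hiF
  have hsum_s : ∑ i ∈ s, (1 - l i) = d + 1 := by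
    rw [sum_sub_distrib, sum_const, nsmul_one, sum_subset (subset_univ s) fun i _ => hsupp i,
      hsum]
    ring
  have hsum_F : ∑ i ∈ F, (1 - l i) = ∑ i ∈ s, (1 - l i) := by
    refine sum_subset hFs fun i his hiF => ?_
    have hli : l i = 1 := by
      by_contra hne
      exact hiF (mem_filter.mpr ⟨mem_univ i,
        lt_of_le_of_ne (hl0 i) (hpos i his).symm, lt_of_le_of_ne (hl1 i) hne⟩)
    rw [hli, sub_self]
  have hlt : ∑ i ∈ F, (1 - l i) < d + 1 := by
    rcases F.eq_empty_or_nonempty with hF | hF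
    · rw [hF, sum_empty]
      positivity
    · calc ∑ i ∈ F, (1 - l i) < ∑ i ∈ F, (1 : ℝ) :=
            sum_lt_sum_of_nonempty hF fun i hi => by linarith [(mem_filter.mp hi).2.1]
        _ = #F := by rw [sum_const, nsmul_one]
        _ ≤ d + 1 := by exact_mod_cast hcard
  linarith

theorem exists_weightPolytope_erase_nonempty [FiniteDimensional ℝ V] [DecidableEq ι] {v : ι → V}
    {s : Finset ι} (hs : finrank ℝ V < #s)
    (h : (weightPolytope v s (#s - finrank ℝ V)).Nonempty) :
    ∃ i ∈ s, (weightPolytope v (s.erase i) (#(s.erase i) - finrank ℝ V)).Nonempty := by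
  obtain ⟨l, hl⟩ := h
  set d := finrank ℝ V
  have hc : (1 : ℝ) ≤ #s - d := by
    rw [le_sub_iff_add_le']
    exact_mod_cast hs
  have hr : (#s - 1 - d : ℝ) / (#s - d) ∈ Set.Icc (0 : ℝ) 1 :=
    ⟨div_nonneg (by linarith) (by linarith), div_le_one_of_le₀ (by linarith) (by linarith)⟩
  have hscaled := smul_mem_weightPolytope hl hr
  rw [div_mul_cancel₀ _ (by linarith)] at hscaled
  obtain ⟨l₁, hl₁⟩ := (isCompact_weightPolytope v s _).extremePoints_nonempty ⟨_, hscaled⟩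
  obtain ⟨i, his, hi⟩ :=
    exists_eq_zero_of_card_fractional_le hl₁.1 (card_fractional_le_of_mem_extremePoints hl₁)
  refine ⟨i, his, l₁, ?_⟩
  rw [cast_card_erase_of_mem his]
  exact mem_weightPolytope_erase hl₁.1 hi

theorem exists_list_weightPolytope_take_nonempty [FiniteDimensional ℝ V] [DecidableEq ι]
    (v : ι → V) (s : Finset ι)
    (hs : finrank ℝ V ≤ #s → (weightPolytope v s (#s - finrank ℝ V)).Nonempty) :
    ∃ L : List ι, L.Nodup ∧ L.toFinset = s ∧ ∀ k, finrank ℝ V ≤ k → k ≤ #s →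
      (weightPolytope v (L.take k).toFinset (k - finrank ℝ V)).Nonempty := by
  induction s using Finset.strongInduction with | H s ih => ?_
  rcases le_or_gt #s (finrank ℝ V) with hle | hlt
  · refine ⟨s.toList, s.nodup_toList, s.toList_toFinset, fun k hdk hks => ?_⟩
    obtain rfl : k = #s := by omega
    rw [List.take_of_length_le (by simp), toList_toFinset]
    exact hs hdk
  obtain ⟨i, his, hi⟩ := exists_weightPolytope_erase_nonempty hlt (hs hlt.le)
  obtain ⟨L, hnd, hL, hpre⟩ := ih (s.erase i) (erase_ssubset his) fun _ => hi
  have hlen : L.length + 1 = #s := by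
    rw [← List.toFinset_card_of_nodup hnd, hL, card_erase_add_one his]
  have hiL : i ∉ L := by simp [← List.mem_toFinset, hL]
  refine ⟨L ++ [i], hnd.append (List.nodup_singleton i) (by simpa using hiL),
    by simp [hL, insert_erase his], fun k hdk hks => ?_⟩
  rcases hks.eq_or_lt with rfl | hks
  · rw [List.take_of_length_le (by simp [hlen]), List.toFinset_append, hL]
    simpa [insert_erase his] using hs hdk
  · rw [List.take_append_of_le_length (by omega)]
    exact hpre k hdk (by rw [card_erase_of_mem his]; omega)

theorem seminorm_sum_le_of_mem_weightPolytope (p : Seminorm ℝ V) {v : ι → V}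
    (hv : ∀ i, p (v i) ≤ 1) {s : Finset ι} {c : ℝ} {l : ι → ℝ}
    (hl : l ∈ weightPolytope v s c) : p (∑ i ∈ s, v i) ≤ #s - c := by
  obtain ⟨⟨-, hl1⟩, hsupp, hsum, hsumv⟩ := hl
  have hsum_s : ∑ i ∈ s, l i = c := by
    rw [sum_subset (subset_univ s) fun i _ => hsupp i, hsum]
  have hsumv_s : ∑ i ∈ s, l i • v i = 0 := by
    rw [sum_subset (subset_univ s) fun i _ hi => by rw [hsupp i hi, zero_smul], hsumv]
  have hcomplement : ∑ i ∈ s, v i = ∑ i ∈ s, (1 - l i) • v i := by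
    simp [sub_smul, sum_sub_distrib, hsumv_s]
  calc p (∑ i ∈ s, v i) ≤ ∑ i ∈ s, p ((1 - l i) • v i) := by
        rw [hcomplement]
        exact le_sum_of_subadditive p (map_zero p).le (map_add_le_add p) s _
    _ ≤ ∑ i ∈ s, (1 - l i) := sum_le_sum fun i _ => by
        have hli : 0 ≤ 1 - l i := sub_nonneg.2 (hl1 i)
        rw [map_smul_eq_mul, Real.norm_eq_abs, abs_of_nonneg hli]
        exact mul_le_of_le_one_right hli (hv i)
    _ = #s - c := by rw [sum_sub_distrib, sum_const, nsmul_one, hsum_s]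

end Steinitz

theorem stmt_5_general (d n : ℕ) (f : (Fin d → ℝ) → ℝ)
    (f_add : ∀ x y, f (x + y) ≤ f x + f y)
    (f_smul : ∀ (a : ℝ) (x), f (a • x) = |a| * f x)
    (v : Fin n → Fin d → ℝ)
    (hv : ∀ i, f (v i) ≤ 1)
    (hsum : ∑ i, v i = 0) :
    ∃ π : Equiv.Perm (Fin n),
      ∀ k : ℕ, 1 ≤ k → k ≤ n →
        f (∑ i ∈ Finset.univ.filter (fun i : Fin n => (i : ℕ) < k), v (π i)) ≤ d := by
  classical
  let p : Seminorm ℝ (Fin d → ℝ) :=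
    Seminorm.of f f_add fun a x => by rw [f_smul, Real.norm_eq_abs]
  have hrank : finrank ℝ (Fin d → ℝ) = d := finrank_fin_fun ℝ
  obtain ⟨L, hnd, hL, hprefix⟩ := Steinitz.exists_list_weightPolytope_take_nonempty v univ
    fun hd => ⟨_, Steinitz.const_mem_weightPolytope_univ hsum (Nat.cast_nonneg _)
      (by simpa using hd)⟩
  obtain ⟨π, hπ⟩ := hnd.exists_perm_image_filter_lt_eq_toFinset_take
    fun x => List.mem_toFinset.mp (hL ▸ mem_univ x)
  refine ⟨π, fun k _ hkn => ?_⟩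
  rw [← sum_image π.injective.injOn, hπ k]
  have hcard : (#(L.take k).toFinset : ℝ) ≤ k := by
    exact_mod_cast (List.toFinset_card_le _).trans (List.length_take_le _ _)
  suffices p (∑ i ∈ (L.take k).toFinset, v i) ≤ d from this
  rcases le_or_gt d k with hdk | hkd
  · obtain ⟨l, hl⟩ := hprefix k (hrank.trans_le hdk) (by simpa using hkn)
    have hweights := Steinitz.seminorm_sum_le_of_mem_weightPolytope p hv hl
    rw [hrank] at hweights
    linarith
  · have hkd' : (k : ℝ) ≤ d := by exact_mod_cast hkd.le
    linarith [p.sum_le_card hv (L.take k).toFinset]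

/-- Steinitz lemma (Grinberg–Sevastyanov version): if `f` is a norm on `ℝ^d` and
`v_1, …, v_n` are vectors of norm at most 1 summing to 0, then they can be permuted so
that all partial sums have norm at most `d`. -/
theorem stmt_5 (d n : ℕ) (hd : 1 ≤ d) (f : (Fin d → ℝ) → ℝ)
    (f_add : ∀ x y, f (x + y) ≤ f x + f y)
    (f_smul : ∀ (a : ℝ) (x), f (a • x) = |a| * f x)
    (f_eq_zero : ∀ x, f x = 0 → x = 0)
    (v : Fin n → Fin d → ℝ)
    (hv : ∀ i, f (v i) ≤ 1)
    (hsum : ∑ i, v i = 0) :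
    ∃ π : Equiv.Perm (Fin n),
      ∀ k : ℕ, 1 ≤ k → k ≤ n →
        f (∑ i ∈ Finset.univ.filter (fun i : Fin n => (i : ℕ) < k), v (π i)) ≤ d :=
  stmt_5_general d n f f_add f_smul v hv hsum
end

section
/- Let d ≥ 1 and t ≥ 2, and let w_1, …, w_t be vectors with all coordinates in {-1, +1} ⊆ ℝ^d such that w_1 + ⋯ + w_t = 0 and such that ∑_{i∈S} w_i ≠ 0 for every subset S ⊆ {1,…,t} with 2 ≤ |S| < t. Then there exists a sequence v_1, …, v_t of vectors in [-1,1]^{2d} with v_1 + ⋯ + v_t ∈ [-1,1]^{2d} such that for every subset S ⊆ {1,…,t} with 2 ≤ |S| < t, the sum ∑_{i∈S} v_i lies outside [-1,1]^{2d}. (Dimension-doubling: a minimal-with-respect-to-zero-sums ±1 sequence in dimension d yields a minimal sequence of the same length in the box in dimension 2d, so τ(2d) ≥ t.) -/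
/-!
Rescale each `w_i` by `1 - c` with `c = 1/t` and append two copies of it, shifted by `+c` and by
`-c`. The full sum becomes `(t c, -t c) = (1, -1)`, which lies in the box. A proper subset `S`
with `|S| ≥ 2` has a coordinate `j` where `W = ∑_{i∈S} w_i j` is a nonzero integer, so `|W| ≥ 1`;
in the copy whose shift has the sign of `W`, coordinate `j` of the subset sum has modulus at least
`(1 - c) + |S| c ≥ 1 + c > 1`.
-/

open Finset

theorem one_le_abs_sum_of_forall_exists_intCast {ι : Type*} (S : Finset ι) (x : ι → ℝ)
    (hx : ∀ i, ∃ z : ℤ, x i = z) (hS : ∑ i ∈ S, x i ≠ 0) : 1 ≤ |∑ i ∈ S, x i| := by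
  choose z hz using hx
  simp only [hz] at hS ⊢
  exact_mod_cast Int.one_le_abs (by exact_mod_cast hS)

section ShiftedDouble

variable {ι κ : Type*}

def shiftedDouble (c : ℝ) (x : κ → ℝ) : Fin 2 × κ → ℝ :=
  fun p => (1 - c) * x p.2 + ![c, -c] p.1

theorem abs_shiftedDouble_le_one {c : ℝ} (hc₀ : 0 ≤ c) (hc₁ : c ≤ 1) {x : κ → ℝ}
    (hx : ∀ j, |x j| ≤ 1) (p : Fin 2 × κ) : |shiftedDouble c x p| ≤ 1 := by
  obtain ⟨b, j⟩ := p
  have hshift : |![c, -c] b| = c := by fin_cases b <;> simp [abs_of_nonneg hc₀]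
  calc |shiftedDouble c x (b, j)| ≤ |(1 - c) * x j| + |![c, -c] b| := abs_add_le _ _
    _ = (1 - c) * |x j| + c := by rw [abs_mul, abs_of_nonneg (by linarith), hshift]
    _ ≤ (1 - c) * 1 + c := by nlinarith [hx j]
    _ = 1 := by ring

theorem sum_shiftedDouble_apply (c : ℝ) (S : Finset ι) (w : ι → κ → ℝ) (b : Fin 2) (j : κ) :
    ∑ i ∈ S, shiftedDouble c (w i) (b, j) = (1 - c) * ∑ i ∈ S, w i j + #S * ![c, -c] b := by
  simp only [shiftedDouble, sum_add_distrib, ← mul_sum, sum_const, nsmul_eq_mul]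

theorem abs_sum_shiftedDouble_le_one [Fintype ι] {w : ι → κ → ℝ} (hw : ∑ i, w i = 0)
    (p : Fin 2 × κ) : |∑ i, shiftedDouble (Fintype.card ι : ℝ)⁻¹ (w i) p| ≤ 1 := by
  obtain ⟨b, j⟩ := p
  have hwj : ∑ i, w i j = 0 := by rw [← Finset.sum_apply, hw, Pi.zero_apply]
  have hcard : |(#(univ : Finset ι) : ℝ) * (Fintype.card ι : ℝ)⁻¹| ≤ 1 := by
    rw [card_univ, abs_of_nonneg (by positivity)]
    exact mul_inv_le_one
  rw [sum_shiftedDouble_apply, hwj, mul_zero, zero_add]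
  fin_cases b <;> simpa using hcard

theorem exists_one_lt_abs_sum_shiftedDouble {c : ℝ} (hc₀ : 0 < c) (hc₁ : c ≤ 1) {S : Finset ι}
    (hS : 2 ≤ #S) {w : ι → κ → ℝ} {j : κ} (hW : 1 ≤ |∑ i ∈ S, w i j|) :
    ∃ b, 1 < |∑ i ∈ S, shiftedDouble c (w i) (b, j)| := by
  have hSR : (2 : ℝ) ≤ #S := by exact_mod_cast hS
  simp only [sum_shiftedDouble_apply]
  rcases le_abs'.mp hW with hneg | hpos
  · refine ⟨1, lt_abs.mpr (Or.inr ?_)⟩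
    simp only [Fin.isValue, Matrix.cons_val_one, Matrix.cons_val_fin_one]
    nlinarith
  · refine ⟨0, lt_abs.mpr (Or.inl ?_)⟩
    simp only [Fin.isValue, Matrix.cons_val_zero]
    nlinarith

end ShiftedDouble

theorem stmt_10_general (d t : ℕ)
    (w : Fin t → Fin d → ℝ)
    (hw : ∀ i j, w i j = 1 ∨ w i j = -1)
    (hsum : ∑ i, w i = 0)
    (hmin : ∀ S : Finset (Fin t), 2 ≤ S.card → S.card < t → ∑ i ∈ S, w i ≠ 0) :
    ∃ v : Fin t → Fin (2 * d) → ℝ,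
      (∀ i j, |v i j| ≤ 1) ∧
      (∀ j, |∑ i, v i j| ≤ 1) ∧
      (∀ S : Finset (Fin t), 2 ≤ S.card → S.card < t →
        ¬ (∀ j, |∑ i ∈ S, v i j| ≤ 1)) := by
  set c : ℝ := (t : ℝ)⁻¹
  refine ⟨fun i k => shiftedDouble c (w i) (finProdFinEquiv.symm k), fun i k => ?_,
    fun k => ?_, fun S hS₂ hSt hbox => ?_⟩
  · refine abs_shiftedDouble_le_one (by positivity) (inv_le_one_of_one_le₀ ?_) (fun j => ?_) _
    · exact_mod_cast Fin.pos_iff_nonempty.mpr ⟨i⟩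
    · rcases hw i j with h | h <;> simp [h]
  · simpa using abs_sum_shiftedDouble_le_one hsum (finProdFinEquiv.symm k)
  · obtain ⟨j, hj⟩ : ∃ j, ∑ i ∈ S, w i j ≠ 0 := by
      by_contra! h
      exact hmin S hS₂ hSt (funext fun j => by rw [Finset.sum_apply, h j, Pi.zero_apply])
    have hW := one_le_abs_sum_of_forall_exists_intCast S (w · j)
      (fun i => by rcases hw i j with h | h; exacts [⟨1, by simp [h]⟩, ⟨-1, by simp [h]⟩]) hj
    have ht : (1 : ℝ) ≤ t := by exact_mod_cast (by omega : 1 ≤ t)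
    obtain ⟨b, hb⟩ := exists_one_lt_abs_sum_shiftedDouble (by positivity) (inv_le_one_of_one_le₀ ht)
      hS₂ hW
    exact hb.not_ge (by simpa using hbox (finProdFinEquiv (b, j)))

/-- Dimension-doubling: if `w_1, …, w_t` are ±1 vectors in `ℝ^d` with sum `0` such that no
proper subset of size at least 2 has sum `0`, then there are vectors `v_1, …, v_t` in the box
`[-1,1]^{2d}` with sum in the box such that every proper subset of size at least 2 has sum
outside the box. -/
theorem stmt_10 (d t : ℕ) (hd : 1 ≤ d) (ht : 2 ≤ t)
    (w : Fin t → Fin d → ℝ)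
    (hw : ∀ i j, w i j = 1 ∨ w i j = -1)
    (hsum : ∑ i, w i = 0)
    (hmin : ∀ S : Finset (Fin t), 2 ≤ S.card → S.card < t → ∑ i ∈ S, w i ≠ 0) :
    ∃ v : Fin t → Fin (2 * d) → ℝ,
      (∀ i j, |v i j| ≤ 1) ∧
      (∀ j, |∑ i, v i j| ≤ 1) ∧
      (∀ S : Finset (Fin t), 2 ≤ S.card → S.card < t →
        ¬ (∀ j, |∑ i ∈ S, v i j| ≤ 1)) :=
  stmt_10_general d t w hw hsum hmin
end
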